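/- arXiv:2109.08127 — 3 statements merged into one kernel-verified Lean document; each statement's English description precedes it below -/
import Mathlib

section
/- Let φ be a Riesz basis for H with canonical dual ψ and m ∈ ℓ^∞. Then the point spectrum of M_{m,φ,ψ} is exactly {m_n : n ∈ ℕ}, the continuous spectrum is the set of limit points of m not belonging to {m_n : n ∈ ℕ}, and the residual spectrum is empty. -/
open scoped InnerProductSpace
open Filter

open scoped ENNReal

set_option linter.unusedSectionVars false
set_option maxHeartbeats 1000000

section Aux
variable {H : Type*} [NormedAddCommGroup H] [InnerProductSpace ℂ H] [CompleteSpace H]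
  {φ ψ : ℕ → H} {m : ℕ → ℂ}

lemma aux_coeff (hbiorth : ∀ n k : ℕ, ⟪ψ k, φ n⟫_ℂ = if n = k then 1 else 0)
    {c : ℕ → ℂ} {s : H} (hs : HasSum (fun n => c n • φ n) s) (k : ℕ) :
    ⟪ψ k, s⟫_ℂ = c k := by
  have h1 : HasSum (fun n => (innerSL ℂ (ψ k)) (c n • φ n)) ((innerSL ℂ (ψ k)) s) :=
    hs.mapL (innerSL ℂ (ψ k))
  simp only [innerSL_apply_apply] at h1
  have h2 : (fun n => ⟪ψ k, c n • φ n⟫_ℂ) = fun n => if n = k then c k else 0 := by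
    funext n
    rw [inner_smul_right, hbiorth]
    by_cases h : n = k <;> simp [h]
  rw [h2] at h1
  exact h1.unique (hasSum_ite_eq k (c k))

lemma aux_eqz (hdual : ∀ f : H, HasSum (fun n => ⟪ψ n, f⟫_ℂ • φ n) f)
    {f : H} (hf : ∀ n, ⟪ψ n, f⟫_ℂ = 0) : f = 0 := by
  have h := hdual f
  simp only [hf, zero_smul] at h
  exact h.unique hasSum_zero

lemma aux_phi_ne (hbiorth : ∀ n k : ℕ, ⟪ψ k, φ n⟫_ℂ = if n = k then 1 else 0) (j : ℕ) :
    φ j ≠ 0 := by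
  intro h
  have := hbiorth j j
  simp [h] at this

lemma aux_Mcoeff (hbiorth : ∀ n k : ℕ, ⟪ψ k, φ n⟫_ℂ = if n = k then 1 else 0)
    {M : H →L[ℂ] H}
    (hM : ∀ f : H, HasSum (fun n => m n • ⟪ψ n, f⟫_ℂ • φ n) (M f))
    (f : H) (k : ℕ) : ⟪ψ k, M f⟫_ℂ = m k * ⟪ψ k, f⟫_ℂ := by
  have h := hM f
  simp only [smul_smul] at h
  exact aux_coeff hbiorth h k

lemma aux_Tapp {M : H →L[ℂ] H} (lam : ℂ) (f : H) :
    (M - lam • ContinuousLinearMap.id ℂ H) f = M f - lam • f := by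
  simp

lemma aux_Mphi (hbiorth : ∀ n k : ℕ, ⟪ψ k, φ n⟫_ℂ = if n = k then 1 else 0)
    {M : H →L[ℂ] H}
    (hM : ∀ f : H, HasSum (fun n => m n • ⟪ψ n, f⟫_ℂ • φ n) (M f))
    (j : ℕ) : M (φ j) = m j • φ j := by
  have h := hM (φ j)
  have h2 : (fun n => m n • ⟪ψ n, φ j⟫_ℂ • φ n) = fun n => if n = j then m j • φ j else 0 := by
    funext n
    rw [hbiorth]
    by_cases hn : n = j
    · subst hn; simp
    · have : ¬ (j = n) := fun hh => hn hh.symm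
      simp [hn, this]
  rw [h2] at h
  exact h.unique (hasSum_ite_eq j (m j • φ j))

lemma aux_inj (hbiorth : ∀ n k : ℕ, ⟪ψ k, φ n⟫_ℂ = if n = k then 1 else 0)
    (hdual : ∀ f : H, HasSum (fun n => ⟪ψ n, f⟫_ℂ • φ n) f)
    {M : H →L[ℂ] H}
    (hM : ∀ f : H, HasSum (fun n => m n • ⟪ψ n, f⟫_ℂ • φ n) (M f))
    {lam : ℂ} (hlam : lam ∉ Set.range m) :
    Function.Injective ⇑(M - lam • ContinuousLinearMap.id ℂ H) := by
  intro a b hab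
  have hz : (M - lam • ContinuousLinearMap.id ℂ H) (a - b) = 0 := by
    rw [map_sub, hab, sub_self]
  rw [aux_Tapp] at hz
  have hc : ∀ k, ⟪ψ k, a - b⟫_ℂ = 0 := by
    intro k
    have h1 : ⟪ψ k, M (a - b) - lam • (a - b)⟫_ℂ = (m k - lam) * ⟪ψ k, a - b⟫_ℂ := by
      rw [inner_sub_right, inner_smul_right, aux_Mcoeff hbiorth hM]
      ring
    rw [hz, inner_zero_right] at h1
    have hne : m k - lam ≠ 0 := by
      intro h
      exact hlam ⟨k, by linear_combination h⟩
    exact (mul_eq_zero.mp h1.symm).resolve_left hne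
  have := aux_eqz hdual hc
  exact sub_eq_zero.mp this

lemma aux_dense
    (hcomplete : (Submodule.span ℂ (Set.range φ)).topologicalClosure = ⊤)
    (hbiorth : ∀ n k : ℕ, ⟪ψ k, φ n⟫_ℂ = if n = k then 1 else 0)
    {M : H →L[ℂ] H}
    (hM : ∀ f : H, HasSum (fun n => m n • ⟪ψ n, f⟫_ℂ • φ n) (M f))
    {lam : ℂ} (hlam : lam ∉ Set.range m) :
    DenseRange ⇑(M - lam • ContinuousLinearMap.id ℂ H) := by
  set T := M - lam • ContinuousLinearMap.id ℂ H with hT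
  have hle : Submodule.span ℂ (Set.range φ) ≤ LinearMap.range (T : H →ₗ[ℂ] H) := by
    rw [Submodule.span_le]
    rintro x ⟨j, rfl⟩
    have hne : m j - lam ≠ 0 := fun h => hlam ⟨j, by linear_combination h⟩
    refine ⟨(m j - lam)⁻¹ • φ j, ?_⟩
    rw [ContinuousLinearMap.coe_coe]
    rw [aux_Tapp, map_smul, aux_Mphi hbiorth hM, smul_smul, smul_smul, ← sub_smul]
    have h1 : (m j - lam)⁻¹ * m j - lam * (m j - lam)⁻¹ = 1 := by field_simp
    rw [h1, one_smul]
  have htop : (LinearMap.range (T : H →ₗ[ℂ] H)).topologicalClosure = ⊤ := by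
    have := Submodule.topologicalClosure_mono hle
    rw [hcomplete] at this
    exact top_le_iff.mp this
  have hdense : Dense ((LinearMap.range (T : H →ₗ[ℂ] H) : Submodule ℂ H) : Set H) :=
    Submodule.dense_iff_topologicalClosure_eq_top.mpr htop
  have : Set.range ⇑T = ((LinearMap.range (T : H →ₗ[ℂ] H) : Submodule ℂ H) : Set H) := by
    ext x; simp [LinearMap.mem_range]
  rw [DenseRange, this]
  exact hdense


lemma aux_memℓ2 {A B : ℝ} (hA : 0 < A)
    (hRB : ∀ c : ℕ → ℂ, Memℓp c 2 →
      ∃ s : H, HasSum (fun n => c n • φ n) s ∧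
        A * ∑' n, ‖c n‖ ^ 2 ≤ ‖s‖ ^ 2 ∧ ‖s‖ ^ 2 ≤ B * ∑' n, ‖c n‖ ^ 2)
    {c : ℕ → ℂ} {f : H} (hf : HasSum (fun n => c n • φ n) f) :
    Memℓp c 2 := by
  have htend := hf
  rw [HasSum, Metric.tendsto_nhds] at htend
  obtain ⟨s₀, hs₀⟩ := (Filter.eventually_atTop).mp (htend 1 one_pos)
  set D : ℝ := ∑ i ∈ s₀, ‖c i • φ i‖ with hD
  have hbound : ∀ u : Finset ℕ, ‖∑ n ∈ u, c n • φ n‖ ≤ ‖f‖ + 1 + D := by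
    intro u
    have h1 : dist (∑ n ∈ u ∪ s₀, c n • φ n) f < 1 := hs₀ _ (Finset.subset_union_right)
    have h2 : ‖∑ n ∈ u ∪ s₀, c n • φ n‖ ≤ ‖f‖ + 1 := by
      have := norm_sub_norm_le (∑ n ∈ u ∪ s₀, c n • φ n) f
      rw [dist_eq_norm] at h1
      linarith
    have h3 : ∑ n ∈ u, c n • φ n = (∑ n ∈ u ∪ s₀, c n • φ n) - ∑ n ∈ (u ∪ s₀) \ u, c n • φ n := by
      rw [eq_sub_iff_add_eq, Finset.sum_sdiff_eq_sub (Finset.subset_union_left)]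
      abel
    have h4 : ‖∑ n ∈ (u ∪ s₀) \ u, c n • φ n‖ ≤ D := by
      calc ‖∑ n ∈ (u ∪ s₀) \ u, c n • φ n‖ ≤ ∑ n ∈ (u ∪ s₀) \ u, ‖c n • φ n‖ :=
            norm_sum_le _ _
        _ ≤ D := by
            apply Finset.sum_le_sum_of_subset_of_nonneg
            · intro x hx
              simp only [Finset.mem_sdiff, Finset.mem_union] at hx
              tauto
            · intros; positivity
    calc ‖∑ n ∈ u, c n • φ n‖ ≤ ‖∑ n ∈ u ∪ s₀, c n • φ n‖ + ‖∑ n ∈ (u ∪ s₀) \ u, c n • φ n‖ := by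
          rw [h3]; exact norm_sub_le _ _
      _ ≤ ‖f‖ + 1 + D := by linarith
  have hsq : ∀ u : Finset ℕ, ∑ n ∈ u, ‖c n‖ ^ 2 ≤ (‖f‖ + 1 + D) ^ 2 / A := by
    intro u
    set cu : ℕ → ℂ := fun n => if n ∈ u then c n else 0 with hcu
    have hmem : Memℓp cu 2 := by
      apply memℓp_gen
      apply summable_of_ne_finset_zero (s := u)
      intro n hn; simp [hcu, hn]
    obtain ⟨s, hs, hlb, -⟩ := hRB cu hmem
    have hz : ∀ n ∉ u, cu n • φ n = 0 := by intro n hn; simp [hcu, hn]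
    have hsum : HasSum (fun n => cu n • φ n) (∑ n ∈ u, cu n • φ n) :=
      hasSum_sum_of_ne_finset_zero hz
    have hse : s = ∑ n ∈ u, c n • φ n := by
      rw [hs.unique hsum]
      apply Finset.sum_congr rfl
      intro n hn; simp [hcu, hn]
    have hts : ∑' n, ‖cu n‖ ^ 2 = ∑ n ∈ u, ‖c n‖ ^ 2 := by
      rw [tsum_eq_sum (s := u) (by intro n hn; simp [hcu, hn])]
      apply Finset.sum_congr rfl
      intro n hn; simp [hcu, hn]
    rw [hse, hts] at hlb
    have h5 : ‖∑ n ∈ u, c n • φ n‖ ^ 2 ≤ (‖f‖ + 1 + D) ^ 2 :=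
      pow_le_pow_left₀ (norm_nonneg _) (hbound u) 2
    rw [le_div_iff₀ hA]
    nlinarith [hlb, h5]
  apply memℓp_gen
  apply summable_of_sum_le (c := (‖f‖ + 1 + D) ^ 2 / A)
  · intro n; positivity
  · intro u
    calc ∑ n ∈ u, ‖c n‖ ^ ((2:ℝ≥0∞)).toReal = ∑ n ∈ u, ‖c n‖ ^ 2 := by
          apply Finset.sum_congr rfl; intros
          norm_num
      _ ≤ _ := hsq u

lemma aux_memℓ2' {A B : ℝ} (hA : 0 < A)
    (hRB : ∀ c : ℕ → ℂ, Memℓp c 2 →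
      ∃ s : H, HasSum (fun n => c n • φ n) s ∧
        A * ∑' n, ‖c n‖ ^ 2 ≤ ‖s‖ ^ 2 ∧ ‖s‖ ^ 2 ≤ B * ∑' n, ‖c n‖ ^ 2)
    {c : ℕ → ℂ} {f : H} (hf : HasSum (fun n => c n • φ n) f) :
    Memℓp c 2 := aux_memℓ2 hA hRB hf

lemma aux_pow2 (x : ℝ) : x ^ ((2:ℝ≥0∞)).toReal = x ^ (2:ℕ) := by
  norm_num

lemma aux_surj {A B : ℝ} (hA : 0 < A)
    (hRB : ∀ c : ℕ → ℂ, Memℓp c 2 →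
      ∃ s : H, HasSum (fun n => c n • φ n) s ∧
        A * ∑' n, ‖c n‖ ^ 2 ≤ ‖s‖ ^ 2 ∧ ‖s‖ ^ 2 ≤ B * ∑' n, ‖c n‖ ^ 2)
    (hbiorth : ∀ n k : ℕ, ⟪ψ k, φ n⟫_ℂ = if n = k then 1 else 0)
    (hdual : ∀ f : H, HasSum (fun n => ⟪ψ n, f⟫_ℂ • φ n) f)
    {M : H →L[ℂ] H}
    (hM : ∀ f : H, HasSum (fun n => m n • ⟪ψ n, f⟫_ℂ • φ n) (M f))
    {lam : ℂ} {d : ℝ} (hd : 0 < d) (hgap : ∀ j, d ≤ ‖m j - lam‖) :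
    Function.Surjective ⇑(M - lam • ContinuousLinearMap.id ℂ H) := by
  intro g
  set c : ℕ → ℂ := fun n => (m n - lam)⁻¹ * ⟪ψ n, g⟫_ℂ with hc
  have hne : ∀ n, m n - lam ≠ 0 := by
    intro n h
    have := hgap n
    rw [h, norm_zero] at this
    linarith
  have hgsum : Summable fun n => ‖⟪ψ n, g⟫_ℂ‖ ^ (2:ℕ) := by
    have h := (memℓp_gen_iff (p := 2) (by norm_num)).mp (aux_memℓ2 hA hRB (hdual g))
    simpa only [aux_pow2] using h
  have hmem : Memℓp c 2 := by
    apply memℓp_gen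
    simp only [aux_pow2]
    refine Summable.of_nonneg_of_le (fun n => by positivity) (fun n => ?_)
      (hgsum.mul_left (d⁻¹ ^ (2:ℕ)))
    have h1 : ‖c n‖ = ‖m n - lam‖⁻¹ * ‖⟪ψ n, g⟫_ℂ‖ := by
      rw [hc]; simp [norm_mul]
    have h2 : ‖m n - lam‖⁻¹ ≤ d⁻¹ := by
      apply inv_anti₀ hd (hgap n)
    rw [h1, mul_pow]
    apply mul_le_mul_of_nonneg_right _ (by positivity)
    exact pow_le_pow_left₀ (by positivity) h2 2
  obtain ⟨s, hs, -, -⟩ := hRB c hmem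
  have hcoeff : ∀ k, ⟪ψ k, s⟫_ℂ = c k := aux_coeff hbiorth hs
  have h1 : HasSum (fun n => (m n * c n) • φ n) (M s) := by
    have h := hM s
    simp only [hcoeff, smul_smul] at h
    exact h
  have h2 : HasSum (fun n => (lam * c n) • φ n) (lam • s) := by
    have h := hs.const_smul lam
    simp only [smul_smul] at h
    exact h
  have h3 := h1.sub h2
  have h4 : (fun n => (m n * c n) • φ n - (lam * c n) • φ n)
      = fun n => ⟪ψ n, g⟫_ℂ • φ n := by
    funext n
    rw [← sub_smul]
    congr 1
    rw [hc]
    field_simp [hne n]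
  rw [h4] at h3
  refine ⟨s, ?_⟩
  rw [aux_Tapp]
  exact h3.unique (hdual g)

lemma aux_not_surj
    (hbiorth : ∀ n k : ℕ, ⟪ψ k, φ n⟫_ℂ = if n = k then 1 else 0)
    (hdual : ∀ f : H, HasSum (fun n => ⟪ψ n, f⟫_ℂ • φ n) f)
    {M : H →L[ℂ] H}
    (hM : ∀ f : H, HasSum (fun n => m n • ⟪ψ n, f⟫_ℂ • φ n) (M f))
    {lam : ℂ} (hlam : lam ∉ Set.range m) {n : ℕ → ℕ}
    (htend : Tendsto (m ∘ n) atTop (nhds lam)) :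
    ¬ Function.Surjective ⇑(M - lam • ContinuousLinearMap.id ℂ H) := by
  intro hsurj
  set T := M - lam • ContinuousLinearMap.id ℂ H with hT
  have hinj : Function.Injective ⇑T := aux_inj hbiorth hdual hM hlam
  have hker : LinearMap.ker (T : H →ₗ[ℂ] H) = ⊥ := LinearMap.ker_eq_bot.mpr hinj
  have hrange : LinearMap.range (T : H →ₗ[ℂ] H) = ⊤ := LinearMap.range_eq_top.mpr hsurj
  let e := ContinuousLinearEquiv.ofBijective T hker hrange
  set K := ‖(e.symm : H →L[ℂ] H)‖ with hKdef
  have hK : 0 ≤ K := norm_nonneg _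
  have key : ∀ j, 1 ≤ K * ‖m j - lam‖ := by
    intro j
    have h1 : e.symm (T (φ j)) = φ j := by
      have h0 : T (φ j) = e (φ j) := rfl
      rw [h0]
      exact e.symm_apply_apply _
    have h2 : ‖φ j‖ ≤ K * ‖T (φ j)‖ := by
      calc ‖φ j‖ = ‖e.symm (T (φ j))‖ := by rw [h1]
        _ ≤ K * ‖T (φ j)‖ := (e.symm : H →L[ℂ] H).le_opNorm _
    have h3 : T (φ j) = (m j - lam) • φ j := by
      rw [hT, aux_Tapp, aux_Mphi hbiorth hM, ← sub_smul]
    rw [h3, norm_smul] at h2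
    have hφ : 0 < ‖φ j‖ := norm_pos_iff.mpr (aux_phi_ne hbiorth j)
    nlinarith [h2, hφ]
  obtain ⟨N, hN⟩ := Metric.tendsto_atTop.mp htend (1/(K+1)) (by positivity)
  have h5 := hN N le_rfl
  have h6 : dist ((m ∘ n) N) lam = ‖m (n N) - lam‖ := by
    simp [Complex.dist_eq, Function.comp]
  rw [h6] at h5
  have h7 := key (n N)
  have h8 : 0 ≤ ‖m (n N) - lam‖ := norm_nonneg _
  have h9 : ‖m (n N) - lam‖ * (K + 1) < 1 := (lt_div_iff₀ (by positivity)).mp h5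
  nlinarith [h7, h8, h9]

lemma aux_seq {lam : ℂ} (hlam : lam ∉ Set.range m)
    (hno : ¬ ∃ n : ℕ → ℕ, StrictMono n ∧ Tendsto (m ∘ n) atTop (nhds lam)) :
    ∃ d > 0, ∀ j, d ≤ ‖m j - lam‖ := by
  by_contra hcon
  push_neg at hcon
  have hpos : ∀ j, 0 < ‖m j - lam‖ := by
    intro j
    rw [norm_pos_iff, sub_ne_zero]
    intro h
    exact hlam ⟨j, h⟩
  have hmin : ∀ N : ℕ, ∃ δ > 0, ∀ i ≤ N, δ ≤ ‖m i - lam‖ := by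
    intro N
    induction N with
    | zero => exact ⟨‖m 0 - lam‖, hpos 0, fun i hi => by rw [Nat.le_zero.mp hi]⟩
    | succ N ih =>
      obtain ⟨δ, hδ, hδ2⟩ := ih
      refine ⟨min δ ‖m (N+1) - lam‖, lt_min hδ (hpos _), ?_⟩
      intro i hi
      rcases Nat.lt_succ_iff_lt_or_eq.mp (Nat.lt_succ_of_le hi) with h | h
      · exact le_trans (min_le_left _ _) (hδ2 i (Nat.lt_succ_iff.mp h))
      · rw [h]; exact min_le_right _ _
  have hnext : ∀ N k : ℕ, ∃ j, N < j ∧ ‖m j - lam‖ < 1/((k:ℝ)+1) := by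
    intro N k
    obtain ⟨δ, hδ, hδ2⟩ := hmin N
    obtain ⟨j, hj⟩ := hcon (min δ (1/((k:ℝ)+1))) (lt_min hδ (by positivity))
    refine ⟨j, ?_, lt_of_lt_of_le hj (min_le_right _ _)⟩
    by_contra hle
    push_neg at hle
    exact absurd (lt_of_lt_of_le hj (min_le_left _ _)) (not_lt.mpr (hδ2 j hle))
  choose F hF1 hF2 using hnext
  let q : ℕ → ℕ := fun k => Nat.rec (F 0 0) (fun k ih => F ih (k+1)) k
  have hmono : StrictMono q := strictMono_nat_of_lt_succ (fun k => hF1 (q k) (k+1))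
  have hb : ∀ k, ‖m (q k) - lam‖ < 1/((k:ℝ)+1) := by
    intro k
    cases k with
    | zero => exact hF2 0 0
    | succ k => exact hF2 (q k) (k+1)
  apply hno
  refine ⟨q, hmono, ?_⟩
  rw [tendsto_iff_norm_sub_tendsto_zero]
  apply squeeze_zero (fun k => norm_nonneg _) (fun k => le_of_lt (hb k))
  exact tendsto_one_div_add_atTop_nhds_zero_nat

end Aux

/-- For a Riesz basis `φ` with canonical dual `ψ`: the point spectrum of `M_{m,φ,ψ}` is
`{m_n}`, the continuous spectrum is the set of limit points of `m` not in `{m_n}`, and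
the residual spectrum is empty. -/
theorem stmt13 {H : Type*} [NormedAddCommGroup H] [InnerProductSpace ℂ H] [CompleteSpace H]
    (φ ψ : ℕ → H)
    (hcomplete : (Submodule.span ℂ (Set.range φ)).topologicalClosure = ⊤)
    (hRiesz : ∃ A B : ℝ, 0 < A ∧ 0 < B ∧ ∀ c : ℕ → ℂ, Memℓp c 2 →
      ∃ s : H, HasSum (fun n => c n • φ n) s ∧
        A * ∑' n, ‖c n‖ ^ 2 ≤ ‖s‖ ^ 2 ∧ ‖s‖ ^ 2 ≤ B * ∑' n, ‖c n‖ ^ 2)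
    (hbiorth : ∀ n k : ℕ, ⟪ψ k, φ n⟫_ℂ = if n = k then 1 else 0)
    (hdual : ∀ f : H, HasSum (fun n => ⟪ψ n, f⟫_ℂ • φ n) f)
    (m : ℕ → ℂ) (hm : ∃ C : ℝ, ∀ n, ‖m n‖ ≤ C)
    (M : H →L[ℂ] H)
    (hM : ∀ f : H, HasSum (fun n => m n • ⟪ψ n, f⟫_ℂ • φ n) (M f)) :
    (∀ lam : ℂ, Module.End.HasEigenvalue (M : H →ₗ[ℂ] H) lam ↔ lam ∈ Set.range m) ∧
    (∀ lam : ℂ,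
      (Function.Injective ⇑(M - lam • ContinuousLinearMap.id ℂ H) ∧
       DenseRange ⇑(M - lam • ContinuousLinearMap.id ℂ H) ∧
       ¬ Function.Surjective ⇑(M - lam • ContinuousLinearMap.id ℂ H)) ↔
      ((∃ n : ℕ → ℕ, StrictMono n ∧ Tendsto (m ∘ n) atTop (nhds lam)) ∧
        lam ∉ Set.range m)) ∧
    (∀ lam : ℂ,
      ¬ (Function.Injective ⇑(M - lam • ContinuousLinearMap.id ℂ H) ∧
         ¬ DenseRange ⇑(M - lam • ContinuousLinearMap.id ℂ H))) := by
  obtain ⟨A, B, hA, hB, hRB⟩ := hRiesz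
  have hnotin : ∀ lam : ℂ,
      Function.Injective ⇑(M - lam • ContinuousLinearMap.id ℂ H) → lam ∉ Set.range m := by
    intro lam hinj
    rintro ⟨j, rfl⟩
    have h0 : (M - m j • ContinuousLinearMap.id ℂ H) (φ j) = 0 := by
      rw [aux_Tapp, aux_Mphi hbiorth hM, sub_self]
    have : φ j = 0 := hinj (a₁ := φ j) (a₂ := 0) (by rw [h0, map_zero])
    exact aux_phi_ne hbiorth j this
  refine ⟨?_, ?_, ?_⟩
  · intro lam
    constructor
    · intro hev
      rw [Module.End.hasEigenvalue_iff] at hev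
      obtain ⟨x, hx, hx0⟩ := Submodule.exists_mem_ne_zero_of_ne_bot hev
      rw [Module.End.mem_eigenspace_iff] at hx
      have hx' : M x = lam • x := hx
      have hc : ∀ k, (m k - lam) * ⟪ψ k, x⟫_ℂ = 0 := by
        intro k
        have h := aux_Mcoeff hbiorth hM x k
        rw [hx', inner_smul_right] at h
        linear_combination -h
      by_contra hlam
      apply hx0
      apply aux_eqz hdual
      intro k
      have hne : m k - lam ≠ 0 := fun h => hlam ⟨k, by linear_combination h⟩
      exact (mul_eq_zero.mp (hc k)).resolve_left hne
    · rintro ⟨j, rfl⟩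
      apply Module.End.hasEigenvalue_of_hasEigenvector (x := φ j)
      constructor
      · rw [Module.End.mem_eigenspace_iff]
        show M (φ j) = m j • φ j
        exact aux_Mphi hbiorth hM j
      · exact aux_phi_ne hbiorth j
  · intro lam
    constructor
    · rintro ⟨hinj, -, hnsurj⟩
      have hlam := hnotin lam hinj
      refine ⟨?_, hlam⟩
      by_contra hno
      obtain ⟨d, hd, hgap⟩ := aux_seq hlam hno
      exact hnsurj (aux_surj hA hRB hbiorth hdual hM hd hgap)
    · rintro ⟨⟨n, hmono, htend⟩, hlam⟩
      exact ⟨aux_inj hbiorth hdual hM hlam, aux_dense hcomplete hbiorth hM hlam,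
        aux_not_surj hbiorth hdual hM hlam htend⟩
  · intro lam
    rintro ⟨hinj, hnd⟩
    exact hnd (aux_dense hcomplete hbiorth hM (hnotin lam hinj))
end

section
/- Let φ be a frame for H with finite excess, ψ a dual frame of φ, m ∈ ℓ^∞, and λ ∈ ℂ with inf_n |m_n − λ| > 0. Then λ ∈ σ(M_{m,φ,ψ}) if and only if N(D_{(m−λ)φ}) ∩ R(C_ψ) ≠ {0}; moreover in that case λ is an eigenvalue of M_{m,φ,ψ}. -/
open scoped InnerProductSpace

/-- The excess of a sequence: the supremum of cardinalities of sets `I ⊆ ℕ` whose removal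
does not change the closed linear span. -/
noncomputable def excess {H : Type*} [NormedAddCommGroup H] [InnerProductSpace ℂ H]
    (χ : ℕ → H) : ℕ∞ :=
  sSup {c : ℕ∞ | ∃ I : Set ℕ, I.encard = c ∧
    (Submodule.span ℂ (χ '' Iᶜ)).topologicalClosure =
      (Submodule.span ℂ (Set.range χ)).topologicalClosure}

noncomputable abbrev E2 : Type := lp (fun _ : ℕ => ℂ) 2

section Aux

lemma memℓp_two_iff (f : ℕ → ℂ) : Memℓp f 2 ↔ Summable (fun n => ‖f n‖ ^ 2) := by
  rw [memℓp_gen_iff (by norm_num)]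
  norm_num

lemma E2_summable_sq (x : E2) : Summable (fun n => ‖x n‖ ^ 2) :=
  (memℓp_two_iff _).1 (lp.memℓp x)

/-- evaluation at a coordinate, as a linear map -/
noncomputable def evalLM (k : ℕ) : E2 →ₗ[ℂ] ℂ where
  toFun x := x k
  map_add' x y := congrFun (lp.coeFn_add x y) k
  map_smul' c x := congrFun (lp.coeFn_smul c x) k

lemma evalLM_apply (k : ℕ) (x : E2) : evalLM k x = x k := rfl

lemma mult_mem (a : ℕ → ℂ) (C : ℝ) (h : ∀ n, ‖a n‖ ≤ C) (x : E2) :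
    Memℓp (fun n => a n * x n) 2 := by
  rw [memℓp_two_iff]
  have hs : Summable (fun n => C ^ 2 * ‖x n‖ ^ 2) := (E2_summable_sq x).mul_left _
  refine Summable.of_nonneg_of_le (fun n => by positivity) (fun n => ?_) hs
  rw [norm_mul, mul_pow]
  have h0 : 0 ≤ ‖a n‖ := norm_nonneg _
  have := h n
  have hsq : ‖a n‖ ^ 2 ≤ C ^ 2 := by nlinarith
  exact mul_le_mul_of_nonneg_right hsq (by positivity)

/-- multiplication operator on ℓ² by a bounded sequence -/
noncomputable def multLM (a : ℕ → ℂ) (C : ℝ) (h : ∀ n, ‖a n‖ ≤ C) : E2 →ₗ[ℂ] E2 where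
  toFun x := ⟨fun n => a n * x n, mult_mem a C h x⟩
  map_add' x y := by
    apply lp.ext
    funext n
    have h1 : ((⟨fun n => a n * x n, mult_mem a C h x⟩ : E2) + ⟨fun n => a n * y n, mult_mem a C h y⟩ : E2) n
        = a n * x n + a n * y n := congrFun (lp.coeFn_add _ _) n
    have h2 : (x + y) n = x n + y n := congrFun (lp.coeFn_add x y) n
    show a n * (x + y) n = _
    rw [h2, h1, mul_add]
  map_smul' c x := by
    apply lp.ext
    funext n
    have h1 : (c • (⟨fun n => a n * x n, mult_mem a C h x⟩ : E2)) n = c * (a n * x n) :=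
      congrFun (lp.coeFn_smul _ _) n
    have h2 : (c • x) n = c * x n := congrFun (lp.coeFn_smul c x) n
    show a n * (c • x) n = _
    rw [h2, RingHom.id_apply, h1]
    ring

lemma multLM_apply (a : ℕ → ℂ) (C : ℝ) (h : ∀ n, ‖a n‖ ≤ C) (x : E2) (n : ℕ) :
    (multLM a C h x) n = a n * x n := rfl

variable {H : Type*} [NormedAddCommGroup H] [InnerProductSpace ℂ H] [CompleteSpace H]

lemma bessel_finset_bound (φ : ℕ → H) (B : ℝ) (hB : 0 ≤ B)
    (hφ : ∀ f : H, Summable (fun n => ‖⟪φ n, f⟫_ℂ‖ ^ 2) ∧ ∑' n, ‖⟪φ n, f⟫_ℂ‖ ^ 2 ≤ B * ‖f‖ ^ 2)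
    (x : ℕ → ℂ) (F : Finset ℕ) :
    ‖∑ n ∈ F, x n • φ n‖ ^ 2 ≤ B * ∑ n ∈ F, ‖x n‖ ^ 2 := by
  set v := ∑ n ∈ F, x n • φ n with hv
  have h1 : (‖v‖ ^ 2 : ℝ) = ‖⟪v, v⟫_ℂ‖ := by
    rw [inner_self_eq_norm_sq_to_K]
    simp [norm_pow]
  have h2 : ⟪v, v⟫_ℂ = ∑ n ∈ F, (starRingEnd ℂ) (x n) * ⟪φ n, v⟫_ℂ := by
    rw [hv, sum_inner]
    simp only [inner_smul_left]
  have h3 : ‖v‖ ^ 2 ≤ ∑ n ∈ F, ‖x n‖ * ‖⟪φ n, v⟫_ℂ‖ := by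
    rw [h1, h2]
    refine (norm_sum_le _ _).trans ?_
    apply Finset.sum_le_sum
    intro n _
    rw [norm_mul, RCLike.norm_conj]
  have h4 : (∑ n ∈ F, ‖x n‖ * ‖⟪φ n, v⟫_ℂ‖) ^ 2 ≤
      (∑ n ∈ F, ‖x n‖ ^ 2) * ∑ n ∈ F, ‖⟪φ n, v⟫_ℂ‖ ^ 2 :=
    Finset.sum_mul_sq_le_sq_mul_sq _ _ _
  have h5 : ∑ n ∈ F, ‖⟪φ n, v⟫_ℂ‖ ^ 2 ≤ B * ‖v‖ ^ 2 := by
    refine le_trans ?_ (hφ v).2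
    exact Summable.sum_le_tsum F (fun n _ => by positivity) (hφ v).1
  have h6 : (0:ℝ) ≤ ∑ n ∈ F, ‖x n‖ * ‖⟪φ n, v⟫_ℂ‖ :=
    Finset.sum_nonneg fun n _ => by positivity
  have h7 : (0:ℝ) ≤ ∑ n ∈ F, ‖x n‖ ^ 2 := Finset.sum_nonneg fun n _ => by positivity
  by_cases hv0 : ‖v‖ = 0
  · rw [hv0]; simpa using mul_nonneg hB h7
  · have hpos : 0 < ‖v‖ ^ 2 := by positivity
    have k1 := mul_le_mul h3 h3 (by positivity : (0:ℝ) ≤ ‖v‖ ^ 2) h6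
    have k3 := mul_le_mul_of_nonneg_left h5 h7
    nlinarith [k1, k3, h4]

lemma synthesis_summable (φ : ℕ → H) (B : ℝ) (hB : 0 ≤ B)
    (hφ : ∀ f : H, Summable (fun n => ‖⟪φ n, f⟫_ℂ‖ ^ 2) ∧ ∑' n, ‖⟪φ n, f⟫_ℂ‖ ^ 2 ≤ B * ‖f‖ ^ 2)
    (x : ℕ → ℂ) (hx : Summable (fun n => ‖x n‖ ^ 2)) :
    Summable (fun n => x n • φ n) := by
  rw [summable_iff_vanishing_norm]
  intro ε hε
  have hε' : 0 < ε ^ 2 / (B + 1) := by positivity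
  obtain ⟨s, hs⟩ := summable_iff_vanishing_norm.1 hx _ hε'
  refine ⟨s, fun t ht => ?_⟩
  have h1 : ‖∑ n ∈ t, x n • φ n‖ ^ 2 ≤ B * ∑ n ∈ t, ‖x n‖ ^ 2 :=
    bessel_finset_bound φ B hB hφ x t
  have h2 : ∑ n ∈ t, ‖x n‖ ^ 2 < ε ^ 2 / (B + 1) := by
    have := hs t ht
    calc ∑ n ∈ t, ‖x n‖ ^ 2 ≤ ‖∑ n ∈ t, ‖x n‖ ^ 2‖ := le_abs_self _
    _ < _ := this
  have h3 : ‖∑ n ∈ t, x n • φ n‖ ^ 2 < ε ^ 2 := by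
    have hB1 : B * (ε ^ 2 / (B + 1)) ≤ ε ^ 2 := by
      rw [mul_div_assoc']
      rw [div_le_iff₀ (by linarith)]
      nlinarith
    have : B * ∑ n ∈ t, ‖x n‖ ^ 2 < ε^2 ∨ B = 0 := by
      rcases eq_or_lt_of_le hB with h | h
      · exact Or.inr h.symm
      · exact Or.inl (lt_of_lt_of_le (by exact mul_lt_mul_of_pos_left h2 h) hB1)
    rcases this with h | h
    · linarith
    · rw [h] at h1
      simp only [zero_mul] at h1
      exact lt_of_le_of_lt h1 (by positivity)
  exact lt_of_pow_lt_pow_left₀ 2 (le_of_lt hε) h3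

/-- synthesis operator as a linear map -/
noncomputable def synOp (φ : ℕ → H) (hs : ∀ x : E2, Summable (fun n => x n • φ n)) :
    E2 →ₗ[ℂ] H where
  toFun x := ∑' n, x n • φ n
  map_add' x y := by
    rw [← Summable.tsum_add (hs x) (hs y)]
    apply tsum_congr
    intro n
    have h : (x + y) n = x n + y n := congrFun (lp.coeFn_add x y) n
    rw [h, add_smul]
  map_smul' c x := by
    simp only [RingHom.id_apply]
    rw [← Summable.tsum_const_smul c (hs x)]
    apply tsum_congr
    intro n
    have h : (c • x) n = c * x n := congrFun (lp.coeFn_smul c x) n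
    rw [h, ← smul_smul]

lemma synOp_apply (φ : ℕ → H) (hs : ∀ x : E2, Summable (fun n => x n • φ n)) (x : E2) :
    synOp φ hs x = ∑' n, x n • φ n := rfl

/-- analysis operator as a linear map -/
noncomputable def anaOp (ψ : ℕ → H)
    (hmem : ∀ f : H, Summable (fun n => ‖⟪ψ n, f⟫_ℂ‖ ^ 2)) : H →ₗ[ℂ] E2 where
  toFun f := ⟨fun n => ⟪ψ n, f⟫_ℂ, (memℓp_two_iff _).2 (hmem f)⟩
  map_add' f g := by
    apply lp.ext
    funext n
    have h1 : ((⟨fun n => ⟪ψ n, f⟫_ℂ, (memℓp_two_iff _).2 (hmem f)⟩ : E2)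
        + ⟨fun n => ⟪ψ n, g⟫_ℂ, (memℓp_two_iff _).2 (hmem g)⟩ : E2) n
        = ⟪ψ n, f⟫_ℂ + ⟪ψ n, g⟫_ℂ := congrFun (lp.coeFn_add _ _) n
    show ⟪ψ n, f + g⟫_ℂ = _
    rw [inner_add_right, h1]
  map_smul' c f := by
    apply lp.ext
    funext n
    have h1 : (c • (⟨fun n => ⟪ψ n, f⟫_ℂ, (memℓp_two_iff _).2 (hmem f)⟩ : E2)) n
        = c * ⟪ψ n, f⟫_ℂ := congrFun (lp.coeFn_smul _ _) n
    show ⟪ψ n, c • f⟫_ℂ = _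
    rw [inner_smul_right, RingHom.id_apply, h1]

lemma anaOp_apply (ψ : ℕ → H) (hmem : ∀ f : H, Summable (fun n => ‖⟪ψ n, f⟫_ℂ‖ ^ 2))
    (f : H) (n : ℕ) : (anaOp ψ hmem f) n = ⟪ψ n, f⟫_ℂ := rfl

lemma elimAux (K : Submodule ℂ E2) (d : ℕ) : ∀ (S : Set ℕ) (c : Fin d → E2),
    (∀ i, c i ∈ K) → (∀ i, ∀ n ∈ S, c i n = 0) → LinearIndependent ℂ c →
    ∃ I : Finset ℕ, I.card = d ∧ (∀ n ∈ I, n ∉ S) ∧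
      ∀ n ∈ I, ∃ w : E2, w ∈ K ∧ (∀ k ∈ S, w k = 0) ∧ w n ≠ 0 ∧
        ∀ k ∈ I, k ≠ n → w k = 0 := by
  induction d with
  | zero => exact fun S c _ _ _ => ⟨∅, rfl, by simp, by simp⟩
  | succ d ih =>
    intro S c hK hS hLI
    have h0 : c 0 ≠ 0 := hLI.ne_zero 0
    have hex : ∃ n₀, c 0 n₀ ≠ 0 := by
      by_contra hcon
      push_neg at hcon
      exact h0 (lp.ext (funext hcon))
    obtain ⟨n₀, hc0⟩ := hex
    have hn₀S : n₀ ∉ S := fun h => hc0 (hS 0 n₀ h)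
    set c' : Fin d → E2 := fun i => c i.succ - (c i.succ n₀ / c 0 n₀) • c 0 with hc'
    have coord : ∀ (i : Fin d) (k : ℕ),
        c' i k = c i.succ k - (c i.succ n₀ / c 0 n₀) * c 0 k := by
      intro i k
      rw [← evalLM_apply, hc', map_sub, map_smul, evalLM_apply, evalLM_apply]
      rfl
    have hK' : ∀ i, c' i ∈ K := fun i => K.sub_mem (hK _) (K.smul_mem _ (hK 0))
    have hS' : ∀ i, ∀ n ∈ insert n₀ S, c' i n = 0 := by
      intro i n hn
      rcases Set.mem_insert_iff.1 hn with rfl | hn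
      · rw [coord, div_mul_cancel₀ _ hc0, sub_self]
      · rw [coord, hS _ _ hn, hS 0 _ hn, mul_zero, sub_zero]
    have hLI' : LinearIndependent ℂ c' := by
      rw [Fintype.linearIndependent_iff]
      intro g hg
      set G : Fin (d + 1) → ℂ :=
        Fin.cases (-∑ i, g i * (c i.succ n₀ / c 0 n₀)) g with hG
      have hGsum : ∑ j, G j • c j = 0 := by
        rw [Fin.sum_univ_succ]
        have : ∑ i : Fin d, G i.succ • c i.succ = ∑ i : Fin d, g i • c i.succ := rfl
        rw [this]
        have hg' : ∑ i : Fin d, g i • c i.succ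
            = (∑ i, g i * (c i.succ n₀ / c 0 n₀)) • c 0 := by
          have := hg
          simp only [hc', smul_sub, Finset.sum_sub_distrib] at this
          rw [sub_eq_zero] at this
          rw [this, Finset.sum_smul]
          congr 1
          funext i
          rw [smul_smul]
        rw [hg']
        show (-∑ i, g i * (c i.succ n₀ / c 0 n₀)) • c 0 + _ = 0
        rw [neg_smul, neg_add_cancel]
      have hGzero := Fintype.linearIndependent_iff.1 hLI G hGsum
      intro i
      exact hGzero i.succ
    obtain ⟨I', hcard, hdisj, hwit⟩ := ih (insert n₀ S) c' hK' hS' hLI'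
    have hn₀I' : n₀ ∉ I' := fun h => (hdisj n₀ h) (Set.mem_insert _ _)
    classical
    refine ⟨insert n₀ I', by rw [Finset.card_insert_of_notMem hn₀I', hcard], ?_, ?_⟩
    · intro n hn
      rcases Finset.mem_insert.1 hn with rfl | hn
      · exact hn₀S
      · exact fun hnS => hdisj n hn (Set.mem_insert_of_mem _ hnS)
    · intro n hn
      rcases Finset.mem_insert.1 hn with rfl | hn
      · -- witness for n₀
        set W : ℕ → E2 := fun k => if h : k ∈ I' then Classical.choose (hwit k h) else 0
          with hW
        have hWspec : ∀ k (h : k ∈ I'), W k ∈ K ∧ (∀ j ∈ insert n S, W k j = 0) ∧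
            W k k ≠ 0 ∧ ∀ j ∈ I', j ≠ k → W k j = 0 := by
          intro k h
          rw [hW]
          simp only [dif_pos h]
          exact Classical.choose_spec (hwit k h)
        set w₀ : E2 := c 0 - ∑ k ∈ I', (c 0 k / W k k) • W k with hw₀
        have coord₀ : ∀ j : ℕ, w₀ j = c 0 j - ∑ k ∈ I', (c 0 k / W k k) * W k j := by
          intro j
          rw [← evalLM_apply, hw₀, map_sub, map_sum]
          simp only [map_smul, evalLM_apply]
          rfl
        refine ⟨w₀, ?_, ?_, ?_, ?_⟩
        · exact K.sub_mem (hK 0) (Submodule.sum_mem K fun k hk =>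
            K.smul_mem _ (hWspec k hk).1)
        · intro k hkS
          rw [coord₀, hS 0 _ hkS, Finset.sum_eq_zero, sub_zero]
          intro j hj
          rw [(hWspec j hj).2.1 k (Set.mem_insert_of_mem _ hkS), mul_zero]
        · rw [coord₀, Finset.sum_eq_zero, sub_zero]
          · exact hc0
          · intro j hj
            rw [(hWspec j hj).2.1 n (Set.mem_insert _ _), mul_zero]
        · intro k hk hkn₀
          have hkI' : k ∈ I' := (Finset.mem_insert.1 hk).resolve_left hkn₀
          rw [coord₀, Finset.sum_eq_single_of_mem k hkI', div_mul_cancel₀ _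
            (hWspec k hkI').2.2.1, sub_self]
          intro j hj hjk
          rw [(hWspec j hj).2.2.2 k hkI' hjk.symm, mul_zero]
      · obtain ⟨w, hwK, hwS, hwn, hwI⟩ := hwit n hn
        refine ⟨w, hwK, fun k hk => hwS k (Set.mem_insert_of_mem _ hk), hwn, ?_⟩
        intro k hk hkn
        rcases Finset.mem_insert.1 hk with rfl | hk
        · exact hwS k (Set.mem_insert _ _)
        · exact hwI k hk hkn

lemma excess_ge (φ : ℕ → H) (hs : ∀ x : E2, Summable (fun n => x n • φ n))
    (d : ℕ) (c : Fin d → E2) (hker : ∀ i, c i ∈ LinearMap.ker (synOp φ hs))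
    (hLI : LinearIndependent ℂ c) : (d : ℕ∞) ≤ excess φ := by
  obtain ⟨I, hcard, -, hwit⟩ := elimAux (LinearMap.ker (synOp φ hs)) d ∅ c hker
    (by simp) hLI
  have hmemI : ∀ n ∈ I, φ n ∈ (Submodule.span ℂ (φ '' (↑I : Set ℕ)ᶜ)).topologicalClosure := by
    intro n hn
    obtain ⟨w, hwK, -, hwn, hwI⟩ := hwit n hn
    have hsum : HasSum (fun k => w k • φ k) 0 := by
      have h1 := (hs w).hasSum
      have h2 : ∑' k, w k • φ k = 0 := by
        rw [← synOp_apply φ hs w]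
        exact LinearMap.mem_ker.1 hwK
      rwa [h2] at h1
    have hupd : HasSum (Function.update (fun k => w k • φ k) n 0) (0 - w n • φ n + 0) :=
      hsum.update n 0
    have hmem : ∀ k, Function.update (fun k => w k • φ k) n 0 k ∈
        Submodule.span ℂ (φ '' (↑I : Set ℕ)ᶜ) := by
      intro k
      rcases eq_or_ne k n with rfl | hkn
      · rw [Function.update_self]; exact Submodule.zero_mem _
      · rw [Function.update_of_ne hkn]
        by_cases hkI : k ∈ I
        · rw [hwI k hkI hkn, zero_smul]; exact Submodule.zero_mem _
        · exact Submodule.smul_mem _ _ (Submodule.subset_span ⟨k, hkI, rfl⟩)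
    have hlim : (0 - w n • φ n + 0) ∈ (Submodule.span ℂ (φ '' (↑I : Set ℕ)ᶜ)).topologicalClosure := by
      refine mem_closure_of_tendsto hupd (Filter.Eventually.of_forall fun s => ?_)
      exact Submodule.sum_mem _ fun k _ => hmem k
    have h9 : w n • φ n ∈ (Submodule.span ℂ (φ '' (↑I : Set ℕ)ᶜ)).topologicalClosure := by
      have := Submodule.neg_mem _ hlim
      simpa using this
    have := Submodule.smul_mem _ (w n)⁻¹ h9
    rwa [smul_smul, inv_mul_cancel₀ hwn, one_smul] at this
  have hspan : (Submodule.span ℂ (φ '' (↑I : Set ℕ)ᶜ)).topologicalClosure =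
      (Submodule.span ℂ (Set.range φ)).topologicalClosure := by
    apply le_antisymm
    · exact Submodule.topologicalClosure_mono (Submodule.span_mono
        (Set.image_subset_range _ _))
    · refine Submodule.topologicalClosure_minimal _ ?_
        (Submodule.isClosed_topologicalClosure _)
      rw [Submodule.span_le]
      rintro - ⟨n, rfl⟩
      by_cases hn : n ∈ I
      · exact hmemI n hn
      · exact Submodule.le_topologicalClosure _
          (Submodule.subset_span ⟨n, hn, rfl⟩)
  refine le_sSup ?_
  exact ⟨(↑I : Set ℕ), by rw [Set.encard_coe_eq_coe_finsetCard, hcard], hspan⟩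

set_option synthInstance.maxHeartbeats 1000000 in
set_option maxHeartbeats 1000000 in
lemma ker_findim (φ : ℕ → H) (hs : ∀ x : E2, Summable (fun n => x n • φ n))
    (hexc : excess φ ≠ ⊤) : FiniteDimensional ℂ (LinearMap.ker (synOp φ hs)) := by
  by_contra hcon
  obtain ⟨N, hN⟩ : ∃ N : ℕ, excess φ = N := by
    cases h : excess φ with
    | top => exact absurd h hexc
    | coe n => exact ⟨n, rfl⟩
  have hrank : ((N + 1 : ℕ) : Cardinal) ≤ Module.rank ℂ (LinearMap.ker (synOp φ hs)) := by
    have : ¬ Module.rank ℂ (LinearMap.ker (synOp φ hs)) < Cardinal.aleph0 := by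
      intro h
      exact hcon (Module.rank_lt_aleph0_iff.1 h)
    push_neg at this
    exact le_trans (Cardinal.nat_lt_aleph0 (N + 1)).le this
  obtain ⟨s, hscard, hsLI⟩ := le_rank_iff_exists_linearIndependent_finset.1 hrank
  have hLI2 : LinearIndependent ℂ
      (fun x : (↑(s : Set (LinearMap.ker (synOp φ hs)))) =>
        ((x : LinearMap.ker (synOp φ hs)) : E2)) := by
    exact hsLI.map' (LinearMap.ker (synOp φ hs)).subtype (Submodule.ker_subtype _)
  let e := (Finset.equivFinOfCardEq hscard).symm
  have hLI3 : LinearIndependent ℂ (fun i : Fin (N + 1) =>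
      (((e i : (↑(s : Set (LinearMap.ker (synOp φ hs))))) :
        LinearMap.ker (synOp φ hs)) : E2)) := by
    exact hLI2.comp e e.injective
  have hker : ∀ i : Fin (N + 1),
      (((e i : (↑(s : Set (LinearMap.ker (synOp φ hs))))) :
        LinearMap.ker (synOp φ hs)) : E2) ∈ LinearMap.ker (synOp φ hs) :=
    fun i => ((e i : (↑(s : Set (LinearMap.ker (synOp φ hs))))) :
        LinearMap.ker (synOp φ hs)).2
  have := excess_ge φ hs (N + 1) _ hker hLI3
  rw [hN] at this
  have : (N + 1 : ℕ) ≤ N := by exact_mod_cast this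
  omega

end Aux

/-- For a frame `φ` with finite excess, a dual frame `ψ`, and `λ` with
`inf_n |m_n − λ| > 0`: `λ ∈ σ(M_{m,φ,ψ})` iff `N(D_{(m−λ)φ}) ∩ R(C_ψ) ≠ {0}`, and in
that case `λ` is an eigenvalue. -/
theorem stmt14 {H : Type*} [NormedAddCommGroup H] [InnerProductSpace ℂ H] [CompleteSpace H]
    (φ ψ : ℕ → H)
    (hφ : ∃ A B : ℝ, 0 < A ∧ 0 < B ∧ ∀ f : H,
      Summable (fun n => ‖⟪φ n, f⟫_ℂ‖ ^ 2) ∧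
      A * ‖f‖ ^ 2 ≤ ∑' n, ‖⟪φ n, f⟫_ℂ‖ ^ 2 ∧
      ∑' n, ‖⟪φ n, f⟫_ℂ‖ ^ 2 ≤ B * ‖f‖ ^ 2)
    (hexc : excess φ ≠ ⊤)
    (hψ : ∃ A B : ℝ, 0 < A ∧ 0 < B ∧ ∀ f : H,
      Summable (fun n => ‖⟪ψ n, f⟫_ℂ‖ ^ 2) ∧
      A * ‖f‖ ^ 2 ≤ ∑' n, ‖⟪ψ n, f⟫_ℂ‖ ^ 2 ∧
      ∑' n, ‖⟪ψ n, f⟫_ℂ‖ ^ 2 ≤ B * ‖f‖ ^ 2)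
    (hdual : ∀ f : H, HasSum (fun n => ⟪ψ n, f⟫_ℂ • φ n) f)
    (m : ℕ → ℂ) (hm : ∃ C : ℝ, ∀ n, ‖m n‖ ≤ C)
    (M : H →L[ℂ] H)
    (hM : ∀ f : H, HasSum (fun n => m n • ⟪ψ n, f⟫_ℂ • φ n) (M f))
    (lam : ℂ) (hsep : ∃ δ : ℝ, 0 < δ ∧ ∀ n, δ ≤ ‖m n - lam‖) :
    (lam ∈ spectrum ℂ M ↔
      ∃ f : H, (∃ n, ⟪ψ n, f⟫_ℂ ≠ 0) ∧
        HasSum (fun n => ⟪ψ n, f⟫_ℂ • ((m n - lam) • φ n)) 0) ∧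
    ((∃ f : H, (∃ n, ⟪ψ n, f⟫_ℂ ≠ 0) ∧
        HasSum (fun n => ⟪ψ n, f⟫_ℂ • ((m n - lam) • φ n)) 0) →
      Module.End.HasEigenvalue (M : H →ₗ[ℂ] H) lam) := by
  obtain ⟨Aφ, Bφ, hAφ, hBφ, hφ'⟩ := hφ
  have hφ2 : ∀ f : H, Summable (fun n => ‖⟪φ n, f⟫_ℂ‖ ^ 2) ∧
      ∑' n, ‖⟪φ n, f⟫_ℂ‖ ^ 2 ≤ Bφ * ‖f‖ ^ 2 := fun f => ⟨(hφ' f).1, (hφ' f).2.2⟩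
  have hs : ∀ x : E2, Summable (fun n => x n • φ n) :=
    fun x => synthesis_summable φ Bφ hBφ.le hφ2 _ (E2_summable_sq x)
  obtain ⟨Aψ, Bψ, hAψ, hBψ, hψ'⟩ := hψ
  have hmem : ∀ f : H, Summable (fun n => ‖⟪ψ n, f⟫_ℂ‖ ^ 2) := fun f => (hψ' f).1
  set D := synOp φ hs with hD
  set Cl := anaOp ψ hmem with hCl
  obtain ⟨C₀, hC₀⟩ := hm
  obtain ⟨δ, hδ, hδle⟩ := hsep
  set a : ℕ → ℂ := fun n => m n - lam with ha
  have habd : ∀ n, ‖a n‖ ≤ C₀ + ‖lam‖ :=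
    fun n => (norm_sub_le _ _).trans (add_le_add (hC₀ n) le_rfl)
  have hane : ∀ n, a n ≠ 0 := by
    intro n h
    have h2 : δ ≤ ‖a n‖ := hδle n
    rw [h, norm_zero] at h2
    linarith
  have hainv : ∀ n, ‖(a n)⁻¹‖ ≤ δ⁻¹ := by
    intro n
    rw [norm_inv]
    exact inv_anti₀ hδ (hδle n)
  set mult := multLM a (C₀ + ‖lam‖) habd with hmult
  set minv := multLM (fun n => (a n)⁻¹) δ⁻¹ hainv with hminv
  have hmult_minv : ∀ y : E2, mult (minv y) = y := by
    intro y
    apply lp.ext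
    funext n
    show a n * ((a n)⁻¹ * y n) = y n
    field_simp [hane n]
  have hminv_mult : ∀ y : E2, minv (mult y) = y := by
    intro y
    apply lp.ext
    funext n
    show (a n)⁻¹ * (a n * y n) = y n
    field_simp [hane n]
  set D' := D ∘ₗ mult with hD'
  have hDC : ∀ f : H, D (Cl f) = f := by
    intro f
    have h1 : D (Cl f) = ∑' n, ⟪ψ n, f⟫_ℂ • φ n := rfl
    rw [h1, (hdual f).tsum_eq]
  have hkey : ∀ f : H, HasSum (fun n => ⟪ψ n, f⟫_ℂ • ((m n - lam) • φ n))
      (M f - lam • f) := by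
    intro f
    have h1 := (hM f).sub ((hdual f).const_smul lam)
    have h2 : (fun n => ⟪ψ n, f⟫_ℂ • ((m n - lam) • φ n))
        = fun n => m n • ⟪ψ n, f⟫_ℂ • φ n - lam • (⟪ψ n, f⟫_ℂ • φ n) := by
      funext n
      rw [smul_smul, smul_smul, smul_smul, ← sub_smul]
      congr 1
      ring
    rw [h2]
    exact h1
  have hTD : ∀ f : H, M f - lam • f = D' (Cl f) := by
    intro f
    have h2 : D' (Cl f) = ∑' n, (a n * ⟪ψ n, f⟫_ℂ) • φ n := rfl
    have h3 : (fun n => ⟪ψ n, f⟫_ℂ • ((m n - lam) • φ n))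
        = fun n => (a n * ⟪ψ n, f⟫_ℂ) • φ n := by
      funext n
      rw [smul_smul]
      congr 1
      ring
    rw [h2, ← (show HasSum (fun n => (a n * ⟪ψ n, f⟫_ℂ) • φ n) (M f - lam • f)
      from h3 ▸ hkey f).tsum_eq]
  have heig : (∃ f : H, (∃ n, ⟪ψ n, f⟫_ℂ ≠ 0) ∧
      HasSum (fun n => ⟪ψ n, f⟫_ℂ • ((m n - lam) • φ n)) 0) →
      Module.End.HasEigenvalue (M : H →ₗ[ℂ] H) lam := by
    rintro ⟨f, ⟨n, hn⟩, hsum0⟩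
    have hfne : f ≠ 0 := by
      rintro rfl
      exact hn (inner_zero_right _)
    have hMf : M f - lam • f = 0 := (hkey f).unique hsum0
    refine Module.End.hasEigenvalue_of_hasEigenvector ⟨?_, hfne⟩
    rw [Module.End.mem_eigenspace_iff]
    show M f = lam • f
    rw [← sub_eq_zero]
    exact hMf
  refine ⟨⟨fun hspec => ?_, fun hScond => ?_⟩, heig⟩
  · -- hard direction
    by_contra hnS
    rw [spectrum.mem_iff] at hspec
    apply hspec
    have hnS' : ∀ f : H, HasSum (fun n => ⟪ψ n, f⟫_ℂ • ((m n - lam) • φ n)) 0 →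
        ∀ n, ⟪ψ n, f⟫_ℂ = 0 := by
      intro f hsum n
      by_contra hne
      exact hnS ⟨f, ⟨n, hne⟩, hsum⟩
    have hinj : ∀ f : H, M f - lam • f = 0 → f = 0 := by
      intro f hf
      have hsum0 : HasSum (fun n => ⟪ψ n, f⟫_ℂ • ((m n - lam) • φ n)) 0 := hf ▸ hkey f
      have hClf : Cl f = 0 := by
        apply lp.ext
        funext n
        exact hnS' f hsum0 n
      rw [← hDC f, hClf, map_zero]
    -- finite dimensionality machinery
    haveI instK₀ : FiniteDimensional ℂ (LinearMap.ker D) := ker_findim φ hs hexc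
    set K' : Submodule ℂ E2 := LinearMap.ker D' with hK'
    set multEquiv : E2 ≃ₗ[ℂ] E2 :=
      LinearEquiv.ofLinear mult minv (LinearMap.ext hmult_minv) (LinearMap.ext hminv_mult)
      with hmE
    have hK'c : K' = Submodule.comap (multEquiv : E2 →ₗ[ℂ] E2) (LinearMap.ker D) := by
      rw [hK', hD', LinearMap.ker_comp]
      rfl
    have hK'map : K' = Submodule.map (multEquiv.symm : E2 →ₗ[ℂ] E2) (LinearMap.ker D) := by
      rw [hK'c, Submodule.comap_equiv_eq_map_symm]
    have eK : (LinearMap.ker D) ≃ₗ[ℂ] K' :=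
      (multEquiv.symm.submoduleMap (LinearMap.ker D)).trans
        (LinearEquiv.ofEq _ _ hK'map.symm)
    haveI : FiniteDimensional ℂ K' := LinearEquiv.finiteDimensional eK
    have hfr : Module.finrank ℂ (LinearMap.ker D) = Module.finrank ℂ K' := eK.finrank_eq
    set R := LinearMap.range Cl with hR
    set π := R.mkQ with hπ
    set g₀ : (LinearMap.ker D) →ₗ[ℂ] (E2 ⧸ R) := π ∘ₗ (LinearMap.ker D).subtype with hg₀d
    have hg₀ : Function.Surjective g₀ := by
      intro v
      obtain ⟨x, rfl⟩ := R.mkQ_surjective v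
      refine ⟨⟨x - Cl (D x), ?_⟩, ?_⟩
      · rw [LinearMap.mem_ker, map_sub, hDC (D x), sub_self]
      · show π (x - Cl (D x)) = π x
        rw [map_sub]
        have : π (Cl (D x)) = 0 := by
          rw [hπ, Submodule.mkQ_apply, Submodule.Quotient.mk_eq_zero]
          exact ⟨D x, rfl⟩
        rw [this, sub_zero]
    haveI : FiniteDimensional ℂ (E2 ⧸ R) := Module.Finite.of_surjective g₀ hg₀
    have hle1 : Module.finrank ℂ (E2 ⧸ R) ≤ Module.finrank ℂ (LinearMap.ker D) := by
      have h1 : LinearMap.range g₀ = ⊤ := LinearMap.range_eq_top.2 hg₀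
      calc Module.finrank ℂ (E2 ⧸ R) = Module.finrank ℂ (⊤ : Submodule ℂ (E2 ⧸ R)) :=
            (finrank_top _ _).symm
        _ = Module.finrank ℂ (LinearMap.range g₀) := by rw [h1]
        _ ≤ _ := LinearMap.finrank_range_le g₀
    set g₁ : K' →ₗ[ℂ] (E2 ⧸ R) := π ∘ₗ K'.subtype with hg₁d
    have hg₁ : Function.Injective g₁ := by
      refine (injective_iff_map_eq_zero g₁).2 ?_
      intro k hk
      have hmemR : (k : E2) ∈ R := by
        have : π (k : E2) = 0 := hk
        rwa [hπ, Submodule.mkQ_apply, Submodule.Quotient.mk_eq_zero] at this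
      obtain ⟨f, hf⟩ := hmemR
      have hD'k : D' (k : E2) = 0 := k.2
      have hMf : M f - lam • f = 0 := by rw [hTD f, hf, hD'k]
      have hf0 : f = 0 := hinj f hMf
      have : (k : E2) = 0 := by rw [← hf, hf0, map_zero]
      exact Subtype.ext this
    have hrange : LinearMap.range g₁ = ⊤ := by
      apply Submodule.eq_top_of_finrank_eq
      apply le_antisymm (Submodule.finrank_le _)
      rw [LinearMap.finrank_range_of_inj hg₁, ← hfr]
      exact hle1
    have hsurj : ∀ h : H, ∃ f : H, M f - lam • f = h := by
      intro h
      set x := minv (Cl h) with hx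
      have hD'x : D' x = h := by
        show D (mult (minv (Cl h))) = h
        rw [hmult_minv, hDC]
      obtain ⟨k, hk⟩ : ∃ k : K', g₁ k = π x := by
        have : π x ∈ LinearMap.range g₁ := hrange ▸ Submodule.mem_top
        exact this
      have hxk : x - (k : E2) ∈ R := by
        have : π (x - (k : E2)) = 0 := by
          rw [map_sub, ← hk]
          exact sub_eq_zero_of_eq rfl
        rwa [hπ, Submodule.mkQ_apply, Submodule.Quotient.mk_eq_zero] at this
      obtain ⟨f, hf⟩ := hxk
      refine ⟨f, ?_⟩
      rw [hTD f, hf, map_sub, hD'x, k.2, sub_zero]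
    -- build the inverse
    set Tc : H →L[ℂ] H := M - lam • (1 : H →L[ℂ] H) with hTc
    have hTcApply : ∀ f : H, Tc f = M f - lam • f := by
      intro f
      rw [hTc]
      simp [ContinuousLinearMap.sub_apply, ContinuousLinearMap.smul_apply,
        ContinuousLinearMap.one_apply]
    have hTcInj : LinearMap.ker (Tc : H →ₗ[ℂ] H) = ⊥ := by
      rw [LinearMap.ker_eq_bot']
      intro f hf
      exact hinj f (by rw [← hTcApply]; exact hf)
    have hTcSurj : LinearMap.range (Tc : H →ₗ[ℂ] H) = ⊤ := by
      rw [LinearMap.range_eq_top]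
      intro h
      obtain ⟨f, hf⟩ := hsurj h
      exact ⟨f, by rw [ContinuousLinearMap.coe_coe, hTcApply]; exact hf⟩
    set e := ContinuousLinearEquiv.ofBijective Tc hTcInj hTcSurj with he
    have hunit : IsUnit Tc := by
      refine isUnit_iff_exists.2 ⟨e.symm.toContinuousLinearMap, ?_, ?_⟩
      · ext f
        show Tc (e.symm f) = f
        exact ContinuousLinearEquiv.ofBijective_apply_symm_apply Tc hTcInj hTcSurj f
      · ext f
        show e.symm (Tc f) = f
        have : Tc f = e f := rfl
        rw [this, ContinuousLinearEquiv.symm_apply_apply]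
    have hAlg : algebraMap ℂ (H →L[ℂ] H) lam - M = -Tc := by
      rw [hTc, Algebra.algebraMap_eq_smul_one]
      abel
    rw [hAlg]
    exact hunit.neg
  · -- spectrum membership from eigenvalue
    obtain ⟨f, ⟨n, hn⟩, hsum0⟩ := hScond
    have hfne : f ≠ 0 := by
      rintro rfl
      exact hn (inner_zero_right _)
    have hMf : M f - lam • f = 0 := (hkey f).unique hsum0
    rw [spectrum.mem_iff]
    intro hu
    obtain ⟨u, hu'⟩ := hu
    have happ : (algebraMap ℂ (H →L[ℂ] H) lam - M) f = 0 := by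
      rw [Algebra.algebraMap_eq_smul_one]
      show (lam • (1 : H →L[ℂ] H) - M) f = 0
      rw [ContinuousLinearMap.sub_apply, ContinuousLinearMap.smul_apply,
        ContinuousLinearMap.one_apply, ← neg_sub, hMf, neg_zero]
    have hf0 : f = 0 := by
      have h1 : ((↑u⁻¹ * ↑u : H →L[ℂ] H)) f = f := by
        rw [Units.inv_mul]
        exact ContinuousLinearMap.one_apply f
      rw [← h1, ContinuousLinearMap.mul_apply, hu', happ, map_zero]
    exact hfne hf0
end

section
/- Let φ be a frame for H with finite excess, ψ a dual frame of φ, and m ∈ ℓ^∞. If λ ∈ ℂ is a limit point of the sequence m, then λ ∈ σ(M_{m,φ,ψ}). -/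
open scoped InnerProductSpace
open Filter

set_option linter.unusedSectionVars false
set_option maxHeartbeats 1000000

noncomputable section AuxFrame
variable {H : Type*} [NormedAddCommGroup H] [InnerProductSpace ℂ H] [CompleteSpace H]
local notation "E2" => lp (fun _ : ℕ => ℂ) 2

lemma sq_toReal (x : ℝ) : x ^ (ENNReal.toReal 2) = x ^ 2 := by
  norm_num [Real.rpow_natCast]

lemma memℓp_of_sq {f : ℕ → ℂ} (h : Summable fun n => ‖f n‖ ^ 2) : Memℓp f 2 := by
  apply memℓp_gen; simpa only [sq_toReal] using h

/-- The analysis operator of a Bessel sequence. -/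
def anaCLM (χ : ℕ → H) (B : ℝ) (hB : 0 ≤ B)
    (hs : ∀ f : H, Summable (fun n => ‖⟪χ n, f⟫_ℂ‖ ^ 2) ∧
      ∑' n, ‖⟪χ n, f⟫_ℂ‖ ^ 2 ≤ B * ‖f‖ ^ 2) : H →L[ℂ] E2 :=
  LinearMap.mkContinuous
    { toFun := fun f => (⟨fun n => ⟪χ n, f⟫_ℂ, memℓp_of_sq (hs f).1⟩ : E2)
      map_add' := by
        intro f g; apply lp.ext; funext n; simp [inner_add_right]; rfl
      map_smul' := by
        intro c f; apply lp.ext; funext n; simp [inner_smul_right, lp.coeFn_smul] }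
    (Real.sqrt B)
    (by
      intro f
      apply lp.norm_le_of_tsum_le (by norm_num) (by positivity)
      simp only [sq_toReal, LinearMap.coe_mk, AddHom.coe_mk]
      calc (∑' n, ‖⟪χ n, f⟫_ℂ‖ ^ 2) ≤ B * ‖f‖ ^ 2 := (hs f).2
        _ = (Real.sqrt B * ‖f‖) ^ 2 := by rw [mul_pow, Real.sq_sqrt hB])

lemma anaCLM_apply (χ : ℕ → H) (B : ℝ) (hB : 0 ≤ B) (hs) (f : H) (n : ℕ) :
    (anaCLM χ B hB hs f : ℕ → ℂ) n = ⟪χ n, f⟫_ℂ := rfl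

variable (χ : ℕ → H) (B : ℝ) (hB : 0 ≤ B)
    (hs : ∀ f : H, Summable (fun n => ‖⟪χ n, f⟫_ℂ‖ ^ 2) ∧
      ∑' n, ‖⟪χ n, f⟫_ℂ‖ ^ 2 ≤ B * ‖f‖ ^ 2)

/-- The synthesis operator, defined as the adjoint of the analysis operator. -/
def synCLM : E2 →L[ℂ] H := ContinuousLinearMap.adjoint (anaCLM χ B hB hs)

lemma inner_synCLM (c : E2) (f : H) :
    ⟪f, synCLM χ B hB hs c⟫_ℂ = ∑' n, ⟪f, (c : ℕ → ℂ) n • χ n⟫_ℂ := by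
  rw [synCLM, ContinuousLinearMap.adjoint_inner_right]
  rw [← lp.hasSum_inner (𝕜 := ℂ) (anaCLM χ B hB hs f) c |>.tsum_eq]
  congr 1; funext n
  rw [anaCLM_apply, RCLike.inner_apply, inner_smul_right, ← inner_conj_symm f (χ n)]

lemma synCLM_eq {c : E2} {g : H} (hg : HasSum (fun n => (c : ℕ → ℂ) n • χ n) g) :
    synCLM χ B hB hs c = g := by
  apply ext_inner_left ℂ
  intro f
  rw [inner_synCLM]
  have := ((innerSL ℂ f).hasSum hg).tsum_eq
  simp only [innerSL_apply_apply] at this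
  exact this

lemma synCLM_single (n : ℕ) : synCLM χ B hB hs (lp.single 2 n (1:ℂ)) = χ n := by
  apply synCLM_eq
  have : ∀ j ∉ ({n} : Finset ℕ), ((lp.single 2 n (1:ℂ)) : ℕ → ℂ) j • χ j = 0 := by
    intro j hj
    rw [lp.single_apply]
    simp only [Finset.mem_singleton] at hj
    rw [Pi.single_eq_of_ne hj, zero_smul]
  have h2 : HasSum _ _ := hasSum_sum_of_ne_finset_zero this
  simpa [lp.single_apply] using h2

/-- Multiplication by a bounded sequence as an operator on ℓ². -/
def mulCLM (a : ℕ → ℂ) (C : ℝ) (hC : ∀ n, ‖a n‖ ≤ C) : E2 →L[ℂ] E2 :=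
  have hC0 : 0 ≤ C := le_trans (norm_nonneg _) (hC 0)
  have key : ∀ x : E2, Summable fun n => ‖a n * (x : ℕ → ℂ) n‖ ^ 2 := by
    intro x
    refine Summable.of_nonneg_of_le (f := fun n => C ^ 2 * ‖(x : ℕ → ℂ) n‖ ^ 2)
      (fun n => by positivity) (fun n => ?_) ?_
    · show ‖a n * (x : ℕ → ℂ) n‖ ^ 2 ≤ C ^ 2 * ‖(x : ℕ → ℂ) n‖ ^ 2
      rw [norm_mul, mul_pow]
      gcongr
      exact hC n
    · apply Summable.mul_left (C ^ 2)
      simpa only [sq_toReal] using (lp.memℓp x).summable (p := 2) (by norm_num)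
  LinearMap.mkContinuous
    { toFun := fun x => (⟨fun n => a n * (x : ℕ → ℂ) n, memℓp_of_sq (key x)⟩ : E2)
      map_add' := by
        intro f g; apply lp.ext; funext n; simp [mul_add]; rfl
      map_smul' := by
        intro c f; apply lp.ext; funext n
        simp [lp.coeFn_smul]
        ring }
    C
    (by
      intro x
      apply lp.norm_le_of_tsum_le (by norm_num) (by positivity)
      simp only [sq_toReal, LinearMap.coe_mk, AddHom.coe_mk]
      calc (∑' n, ‖a n * (x : ℕ → ℂ) n‖ ^ 2)
          ≤ ∑' n, C ^ 2 * ‖(x : ℕ → ℂ) n‖ ^ 2 := by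
            apply Summable.tsum_le_tsum _ (key x) (by
              apply Summable.mul_left
              simpa only [sq_toReal] using (lp.memℓp x).summable (p := 2) (by norm_num))
            intro n
            rw [norm_mul, mul_pow]
            gcongr
            exact hC n
        _ = C ^ 2 * ∑' n, ‖(x : ℕ → ℂ) n‖ ^ 2 := tsum_mul_left
        _ = (C * ‖x‖) ^ 2 := by
            rw [mul_pow]
            congr 1
            have := lp.norm_rpow_eq_tsum (p := 2) (by norm_num) x
            simp only [sq_toReal] at this
            exact this.symm)

lemma mulCLM_apply (a : ℕ → ℂ) (C : ℝ) (hC : ∀ n, ‖a n‖ ≤ C) (x : E2) (n : ℕ) :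
    (mulCLM a C hC x : ℕ → ℂ) n = a n * (x : ℕ → ℂ) n := rfl

lemma removable (φ : ℕ → H) (B : ℝ) (hB : 0 ≤ B)
    (hs : ∀ f : H, Summable (fun n => ‖⟪φ n, f⟫_ℂ‖ ^ 2) ∧
      ∑' n, ‖⟪φ n, f⟫_ℂ‖ ^ 2 ≤ B * ‖f‖ ^ 2) (I : Finset ℕ) (c : ℕ → E2)
    (hker : ∀ j ∈ I, synCLM φ B hB hs (c j) = 0)
    (hbi : ∀ j ∈ I, ∀ i ∈ I, (c j : ℕ → ℂ) i = if i = j then 1 else 0) :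
    (Submodule.span ℂ (φ '' ((I : Set ℕ))ᶜ)).topologicalClosure =
      (Submodule.span ℂ (Set.range φ)).topologicalClosure := by
  have key : ∀ n, φ n ∈ (Submodule.span ℂ (φ '' ((I : Set ℕ))ᶜ)).topologicalClosure := by
    intro n
    by_cases hn : n ∈ I
    · rw [← Submodule.orthogonal_orthogonal_eq_closure]
      rw [Submodule.mem_orthogonal]
      intro f hf
      have hfk : ∀ k, k ∉ I → ⟪φ k, f⟫_ℂ = 0 := by
        intro k hk
        exact hf _ (Submodule.subset_span ⟨k, by simpa using hk, rfl⟩)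
      have h0 : (0 : ℂ) = ∑' k, ⟪f, (c n : ℕ → ℂ) k • φ k⟫_ℂ := by
        rw [← inner_synCLM φ B hB hs (c n) f, hker n hn, inner_zero_right]
      have hsingle : ∀ k, k ≠ n → ⟪f, (c n : ℕ → ℂ) k • φ k⟫_ℂ = 0 := by
        intro k hk
        by_cases hkI : k ∈ I
        · rw [hbi n hn k hkI, if_neg hk, zero_smul, inner_zero_right]
        · rw [inner_smul_right, ← inner_conj_symm f (φ k), hfk k hkI, map_zero, mul_zero]
      rw [tsum_eq_single n hsingle] at h0
      rw [hbi n hn n hn, if_pos rfl, one_smul] at h0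
      exact h0.symm
    · exact Submodule.le_topologicalClosure _
        (Submodule.subset_span ⟨n, by simpa using hn, rfl⟩)
  refine le_antisymm ?_ ?_
  · exact Submodule.topologicalClosure_mono
      (Submodule.span_mono (Set.image_subset_range _ _ |>.trans (le_refl _)))
  · refine Submodule.topologicalClosure_minimal _ ?_ (Submodule.isClosed_topologicalClosure _)
    rw [Submodule.span_le]
    rintro _ ⟨n, rfl⟩
    exact key n

lemma findim_ker (φ : ℕ → H) (B' : ℝ) (hB' : 0 ≤ B')
    (hs' : ∀ f : H, Summable (fun n => ‖⟪φ n, f⟫_ℂ‖ ^ 2) ∧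
      ∑' n, ‖⟪φ n, f⟫_ℂ‖ ^ 2 ≤ B' * ‖f‖ ^ 2)
    (hexc : excess φ ≠ ⊤) :
    FiniteDimensional ℂ (LinearMap.ker (synCLM φ B' hB' hs' : E2 →ₗ[ℂ] H)) := by
  by_contra hinf
  set D := synCLM (H := H) φ B' hB' hs' with hD
  have main : ∀ N : ℕ, ∃ (I : Finset ℕ) (c : ℕ → E2), I.card = N ∧
      (∀ j ∈ I, D (c j) = 0) ∧
      (∀ j ∈ I, ∀ i ∈ I, (c j : ℕ → ℂ) i = if i = j then 1 else 0) := by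
    intro N
    induction N with
    | zero => exact ⟨∅, fun _ => 0, rfl, by simp, by simp⟩
    | succ N ih =>
      obtain ⟨I, c, hcard, hker, hbi⟩ := ih
      have hex : ∃ x : E2, D x = 0 ∧ (∀ j ∈ I, (x : ℕ → ℂ) j = 0) ∧ x ≠ 0 := by
        by_contra hno
        push_neg at hno
        apply hinf
        let ρ : LinearMap.ker (D : E2 →ₗ[ℂ] H) →ₗ[ℂ] ({y // y ∈ I} → ℂ) :=
          { toFun := fun x => fun j => ((x : E2) : ℕ → ℂ) (j : ℕ)
            map_add' := by intro x y; funext j; simp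
            map_smul' := by intro a x; funext j; simp [lp.coeFn_smul] }
        have hinj : Function.Injective ρ := by
          rw [← LinearMap.ker_eq_bot, LinearMap.ker_eq_bot']
          intro x hx
          have hx' : ∀ j ∈ I, ((x : E2) : ℕ → ℂ) j = 0 := by
            intro j hj
            exact congrFun hx ⟨j, hj⟩
          have := hno (x : E2) x.2 hx'
          exact Subtype.ext this
        exact FiniteDimensional.of_injective ρ hinj
      obtain ⟨x, hxK, hxI, hx0⟩ := hex
      have hj : ∃ j : ℕ, (x : ℕ → ℂ) j ≠ 0 := by
        by_contra hc
        push_neg at hc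
        exact hx0 (lp.ext (funext hc))
      obtain ⟨js, hjs⟩ := hj
      have hjsI : js ∉ I := fun h => hjs (hxI js h)
      refine ⟨insert js I,
        fun j => if j = js then ((x : ℕ → ℂ) js)⁻¹ • x
          else c j - ((c j : ℕ → ℂ) js * ((x : ℕ → ℂ) js)⁻¹) • x, ?_, ?_, ?_⟩
      · rw [Finset.card_insert_of_notMem hjsI, hcard]
      · intro j hj
        by_cases h : j = js
        · simp [h, map_smul, hxK]
        · dsimp only
          rw [if_neg h]
          rw [Finset.mem_insert] at hj
          rcases hj with h' | h'
          · exact absurd h' h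
          · simp [map_sub, map_smul, hxK, hker j h']
      · intro j hj i hi
        rw [Finset.mem_insert] at hj hi
        dsimp only
        by_cases hjjs : j = js
        · subst hjjs
          rw [if_pos rfl, lp.coeFn_smul, Pi.smul_apply, smul_eq_mul]
          rcases hi with h' | h'
          · subst h'
            rw [if_pos rfl, inv_mul_cancel₀ hjs]
          · have : i ≠ j := fun hh => hjsI (hh ▸ h')
            rw [hxI i h', mul_zero, if_neg this]
        · rw [if_neg hjjs]
          rcases hj with h' | h'
          · exact absurd h' hjjs
          · rw [lp.coeFn_sub, Pi.sub_apply, lp.coeFn_smul, Pi.smul_apply, smul_eq_mul]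
            rcases hi with h'' | h''
            · subst h''
              rw [mul_assoc, inv_mul_cancel₀ hjs, mul_one, sub_self]
              rw [if_neg (fun hh => hjjs hh.symm)]
            · rw [hxI i h'', mul_zero, sub_zero, hbi j h' i h'']
  apply hexc
  rw [excess]
  rw [sSup_eq_top]
  intro b hb
  lift b to ℕ using hb.ne
  obtain ⟨I, c, hcard, hker, hbi⟩ := main (b + 1)
  refine ⟨((b : ℕ) + 1 : ℕ), ⟨(I : Set ℕ), ?_, removable φ B' hB' hs' I c hker hbi⟩, ?_⟩
  · rw [Set.encard_coe_eq_coe_finsetCard, hcard]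
  · exact_mod_cast Nat.lt_succ_self b

lemma tendsto_wk (D : E2 →L[ℂ] H) (P : E2 →L[ℂ] E2)
    (h1 : ∀ x : E2, x - P x ∈ LinearMap.ker (D : E2 →ₗ[ℂ] H))
    [FiniteDimensional ℂ (LinearMap.ker (D : E2 →ₗ[ℂ] H))]
    (n : ℕ → ℕ) (hn : Filter.Tendsto n atTop atTop) :
    Filter.Tendsto (fun k => (lp.single 2 (n k) (1:ℂ) : E2) - P (lp.single 2 (n k) 1))
      atTop (nhds 0) := by
  set K := LinearMap.ker (D : E2 →ₗ[ℂ] H) with hK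
  set Q : E2 →L[ℂ] E2 := ContinuousLinearMap.id ℂ _ - P with hQdef
  have hQ : ∀ x, Q x ∈ K := by
    intro x
    simpa [hQdef] using h1 x
  set Qr : E2 →L[ℂ] K := Q.codRestrict K hQ with hQr
  set b := Module.finBasis ℂ K with hb
  set ℓ : Fin (Module.finrank ℂ K) → (E2 →L[ℂ] ℂ) :=
    fun i => (LinearMap.toContinuousLinearMap (b.coord i)).comp Qr with hℓ
  set y : Fin (Module.finrank ℂ K) → E2 :=
    fun i => (InnerProductSpace.toDual ℂ _).symm (ℓ i) with hy
  have hyapp : ∀ i x, ℓ i x = ⟪y i, x⟫_ℂ := by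
    intro i x
    rw [hy]
    exact (InnerProductSpace.toDual_symm_apply).symm
  have hcoordto0 : ∀ i, Filter.Tendsto (fun j : ℕ => ‖(y i : ℕ → ℂ) j‖) atTop (nhds 0) := by
    intro i
    have hsum : Summable fun j => ‖(y i : ℕ → ℂ) j‖ ^ 2 := by
      simpa [sq_toReal] using (lp.memℓp (y i)).summable (p := 2) (by norm_num)
    have h2 := hsum.tendsto_atTop_zero
    have h3 := (Real.continuous_sqrt.tendsto 0).comp h2
    simpa [Function.comp_def, Real.sqrt_sq (norm_nonneg _)] using h3
  have key : ∀ x : E2, x - P x = ∑ i, (ℓ i x) • ((b i : K) : E2) := by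
    intro x
    have h1' : (Qr x : E2) = x - P x := by simp [hQr, hQdef]
    have h2 : Qr x = ∑ i, (b.repr (Qr x) i) • b i := (b.sum_repr (Qr x)).symm
    have h3 : ∀ i, b.repr (Qr x) i = ℓ i x := by
      intro i
      rw [hℓ]
      simp [Module.Basis.coord_apply]
    rw [← h1', h2]
    push_cast
    exact Finset.sum_congr rfl (fun i _ => by rw [h3])
  have hterm : ∀ i, Filter.Tendsto (fun k => ℓ i (lp.single 2 (n k) (1:ℂ))) atTop (nhds 0) := by
    intro i
    rw [tendsto_zero_iff_norm_tendsto_zero]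
    have : ∀ k, ‖ℓ i (lp.single 2 (n k) (1:ℂ))‖ = ‖(y i : ℕ → ℂ) (n k)‖ := by
      intro k
      rw [hyapp, lp.inner_single_right, RCLike.inner_apply, one_mul, RCLike.norm_conj]
    simp only [this]
    exact (hcoordto0 i).comp hn
  have := tendsto_finset_sum (Finset.univ : Finset (Fin (Module.finrank ℂ K)))
    (fun i _ => (hterm i).smul_const ((b i : K) : E2))
  simp only [key, zero_smul, Finset.sum_const_zero] at this ⊢
  exact this

end AuxFrame

/-- For a frame `φ` with finite excess and a dual frame `ψ`, every limit point of `m`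
belongs to the spectrum of `M_{m,φ,ψ}`. -/
theorem stmt15 {H : Type*} [NormedAddCommGroup H] [InnerProductSpace ℂ H] [CompleteSpace H]
    (φ ψ : ℕ → H)
    (hφ : ∃ A B : ℝ, 0 < A ∧ 0 < B ∧ ∀ f : H,
      Summable (fun n => ‖⟪φ n, f⟫_ℂ‖ ^ 2) ∧
      A * ‖f‖ ^ 2 ≤ ∑' n, ‖⟪φ n, f⟫_ℂ‖ ^ 2 ∧
      ∑' n, ‖⟪φ n, f⟫_ℂ‖ ^ 2 ≤ B * ‖f‖ ^ 2)
    (hexc : excess φ ≠ ⊤)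
    (hψ : ∃ A B : ℝ, 0 < A ∧ 0 < B ∧ ∀ f : H,
      Summable (fun n => ‖⟪ψ n, f⟫_ℂ‖ ^ 2) ∧
      A * ‖f‖ ^ 2 ≤ ∑' n, ‖⟪ψ n, f⟫_ℂ‖ ^ 2 ∧
      ∑' n, ‖⟪ψ n, f⟫_ℂ‖ ^ 2 ≤ B * ‖f‖ ^ 2)
    (hdual : ∀ f : H, HasSum (fun n => ⟪ψ n, f⟫_ℂ • φ n) f)
    (m : ℕ → ℂ) (hm : ∃ C : ℝ, ∀ n, ‖m n‖ ≤ C)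
    (M : H →L[ℂ] H)
    (hM : ∀ f : H, HasSum (fun n => m n • ⟪ψ n, f⟫_ℂ • φ n) (M f))
    (lam : ℂ)
    (hlp : ∃ n : ℕ → ℕ, StrictMono n ∧ Tendsto (m ∘ n) atTop (nhds lam)) :
    lam ∈ spectrum ℂ M := by
  classical
  obtain ⟨n, hnmono, hmn⟩ := hlp
  obtain ⟨C0, hC0⟩ := hm
  obtain ⟨Aφ, Bφ, hAφ, hBφ, hφ'⟩ := hφ
  obtain ⟨Aψ, Bψ, hAψ, hBψ, hψ'⟩ := hψ
  have hsφ : ∀ f : H, Summable (fun k => ‖⟪φ k, f⟫_ℂ‖ ^ 2) ∧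
      ∑' k, ‖⟪φ k, f⟫_ℂ‖ ^ 2 ≤ Bφ * ‖f‖ ^ 2 := fun f => ⟨(hφ' f).1, (hφ' f).2.2⟩
  have hsψ : ∀ f : H, Summable (fun k => ‖⟪ψ k, f⟫_ℂ‖ ^ 2) ∧
      ∑' k, ‖⟪ψ k, f⟫_ℂ‖ ^ 2 ≤ Bψ * ‖f‖ ^ 2 := fun f => ⟨(hψ' f).1, (hψ' f).2.2⟩
  set Cop := anaCLM ψ Bψ hBψ.le hsψ with hCop
  set D := synCLM φ Bφ hBφ.le hsφ with hDdef
  set P := Cop.comp D with hPdef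
  have hDC : ∀ f : H, D (Cop f) = f := by
    intro f
    exact synCLM_eq φ Bφ hBφ.le hsφ (hdual f)
  have hMf : ∀ f : H, M f = D (mulCLM m C0 hC0 (Cop f)) := by
    intro f
    refine (synCLM_eq φ Bφ hBφ.le hsφ ?_).symm
    have := hM f
    simp only [smul_smul] at this
    exact this
  have h1 : ∀ x : lp (fun _ : ℕ => ℂ) 2, x - P x ∈ LinearMap.ker (D : lp (fun _ : ℕ => ℂ) 2 →ₗ[ℂ] H) := by
    intro x
    rw [LinearMap.mem_ker, ContinuousLinearMap.coe_coe, map_sub, hPdef, ContinuousLinearMap.comp_apply, hDC, sub_self]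
  haveI hfin : FiniteDimensional ℂ (LinearMap.ker (D : lp (fun _ : ℕ => ℂ) 2 →ₗ[ℂ] H)) :=
    findim_ker φ Bφ hBφ.le hsφ hexc
  have hntop : Tendsto n atTop atTop := hnmono.tendsto_atTop
  set e : ℕ → lp (fun _ : ℕ => ℂ) 2 := fun k => lp.single 2 (n k) 1 with he
  set w : ℕ → lp (fun _ : ℕ => ℂ) 2 := fun k => e k - P (e k) with hw
  have hwt : Tendsto w atTop (nhds 0) := tendsto_wk D P h1 n hntop
  have hek : ∀ k, ‖e k‖ = 1 := by
    intro k
    have := lp.norm_single (p := 2) (E := fun _ : ℕ => ℂ) (by norm_num) (n k) (1:ℂ)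
    exact this.trans norm_one
  have hDe : ∀ k, D (e k) = φ (n k) := fun k => synCLM_single φ Bφ hBφ.le hsφ (n k)
  set a : ℕ → ℂ := fun j => lam - m j with ha
  set C1 : ℝ := ‖lam‖ + C0 with hC1
  have haC : ∀ j, ‖a j‖ ≤ C1 := by
    intro j
    refine (norm_sub_le _ _).trans ?_
    exact add_le_add le_rfl (hC0 j)
  set u : ℕ → H := fun k => D (P (e k)) with hu
  have hPP : ∀ x : lp (fun _ : ℕ => ℂ) 2, Cop (D (P x)) = P x := by
    intro x
    simp only [hPdef, ContinuousLinearMap.comp_apply]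
    rw [hDC]
  have hid : ∀ k, lam • u k - M (u k) =
      (lam - m (n k)) • φ (n k) - D (mulCLM a C1 haC (w k)) := by
    intro k
    rw [hMf (u k)]
    have h6 : Cop (u k) = P (e k) := hPP (e k)
    rw [h6]
    have h7 : lam • u k = D (lam • P (e k)) := by rw [hu, map_smul]
    rw [h7, ← map_sub]
    have h8 : lam • P (e k) - mulCLM m C0 hC0 (P (e k)) = mulCLM a C1 haC (P (e k)) := by
      apply lp.ext; funext j
      rw [lp.coeFn_sub, Pi.sub_apply, lp.coeFn_smul, Pi.smul_apply, smul_eq_mul,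
        mulCLM_apply, mulCLM_apply, ha]
      ring
    rw [h8]
    have h9 : P (e k) = e k - w k := by rw [hw]; exact (sub_sub_cancel _ _).symm
    rw [h9, map_sub, map_sub]
    congr 1
    have hmule : mulCLM a C1 haC (e k) = (lam - m (n k)) • (e k) := by
      apply lp.ext; funext j
      rw [mulCLM_apply, lp.coeFn_smul, Pi.smul_apply, smul_eq_mul]
      by_cases hj : j = n k
      · subst hj; rfl
      · rw [he]
        simp only [lp.single_apply, Pi.single_eq_of_ne hj, mul_zero]
    rw [hmule, map_smul, hDe]
  have hto0 : Tendsto (fun k => lam • u k - M (u k)) atTop (nhds 0) := by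
    have t1 : Tendsto (fun k => (lam - m (n k)) • φ (n k)) atTop (nhds 0) := by
      rw [tendsto_zero_iff_norm_tendsto_zero]
      have hb : ∀ k, ‖(lam - m (n k)) • φ (n k)‖ ≤ ‖lam - m (n k)‖ * ‖D‖ := by
        intro k
        rw [norm_smul]
        gcongr
        calc ‖φ (n k)‖ = ‖D (e k)‖ := by rw [hDe]
          _ ≤ ‖D‖ * ‖e k‖ := D.le_opNorm _
          _ = ‖D‖ := by rw [hek, mul_one]
      refine squeeze_zero (fun k => norm_nonneg _) hb ?_
      have hml : Tendsto (fun k => lam - m (n k)) atTop (nhds 0) := by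
        have := (tendsto_const_nhds (x := lam) (f := atTop (α := ℕ))).sub hmn
        simpa using this
      simpa using hml.norm.mul_const ‖D‖
    have t2 : Tendsto (fun k => D (mulCLM a C1 haC (w k))) atTop (nhds 0) := by
      have hcont := (D.comp (mulCLM a C1 haC)).continuous
      have := (hcont.tendsto 0).comp hwt
      simpa [Function.comp_def] using this
    have := t1.sub t2
    simp only [sub_zero] at this
    simp only [hid]
    exact this
  by_contra hsp
  rw [spectrum.mem_iff, not_not] at hsp
  obtain ⟨T, hT⟩ := hsp
  have hSf : ∀ f : H, (↑T⁻¹ : H →L[ℂ] H) ((algebraMap ℂ (H →L[ℂ] H) lam - M) f) = f := by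
    intro f
    rw [← hT, ← ContinuousLinearMap.mul_apply, T.inv_mul, ContinuousLinearMap.one_apply]
  have halg : ∀ f : H, (algebraMap ℂ (H →L[ℂ] H) lam - M) f = lam • f - M f := by
    intro f
    simp [Algebra.algebraMap_eq_smul_one, ContinuousLinearMap.sub_apply,
      ContinuousLinearMap.smul_apply]
  have hu0 : Tendsto u atTop (nhds 0) := by
    have heq : ∀ k, u k = (↑T⁻¹ : H →L[ℂ] H) (lam • u k - M (u k)) := by
      intro k
      rw [← halg, hSf]
    have hcont := (↑T⁻¹ : H →L[ℂ] H).continuous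
    have := (hcont.tendsto 0).comp hto0
    simp only [Function.comp_def, map_zero] at this
    exact (funext heq : u = _) ▸ this
  have hv0 : Tendsto (fun k => ‖e k - w k‖) atTop (nhds 0) := by
    have := (Cop.continuous.tendsto 0).comp hu0
    simp only [Function.comp_def, map_zero] at this
    have heq : ∀ k, Cop (u k) = e k - w k := by
      intro k
      rw [hu, hPP (e k), hw]
      exact (sub_sub_cancel _ _).symm
    simp only [heq] at this
    simpa using this.norm
  have hlower : ∀ k, 1 - ‖w k‖ ≤ ‖e k - w k‖ := by
    intro k
    calc 1 - ‖w k‖ = ‖e k‖ - ‖w k‖ := by rw [hek]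
      _ ≤ ‖e k - w k‖ := norm_sub_norm_le _ _
  have hup : Tendsto (fun k => 1 - ‖w k‖) atTop (nhds 1) := by
    have := (tendsto_const_nhds (x := (1:ℝ)) (f := atTop (α := ℕ))).sub hwt.norm
    simpa using this
  have : (1:ℝ) ≤ 0 := le_of_tendsto_of_tendsto' hup hv0 hlower
  linarith
end
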